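/- For every real p with 1 ≤ p ≤ 3 there exists a constant C > 0 such that for all real a, b: | |a+b|^p − |a|^p − |b|^p − p·a·b·(|a|^{p−2} + |b|^{p−2}) | ≤ C·|a|·|b|^{p−1} if |a| ≥ |b|, and ≤ C·|a|^{p−1}·|b| if |a| ≤ |b|. -/

import Mathlib

/-!
Write `φ(x) = sign x · |x|^(p-1)`, so that `t ↦ |t|^p` is convex with derivative `p φ`.
Convexity squeezes the remainder `R = |a+b|^p - |a|^p - p φ(a) b` between `0` and
`p b (φ(a+b) - φ(a))`. For `|b| ≤ |a|` the increment of `φ` is controlled by its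
`(p-1)`-Hölder continuity when `p ≤ 2` and by its local Lipschitz bound `≲ |a|^(p-2) |b|`
when `2 ≤ p ≤ 3`; both give `R ≲ |a| |b|^(p-1)`. The two remaining terms `|b|^p` and
`p a φ(b)` are of that size trivially.
-/

open Real

noncomputable def signedRpow (α x : ℝ) : ℝ := Real.sign x * |x| ^ α

noncomputable def rpowExpansionError (p a b : ℝ) : ℝ :=
  |a + b| ^ p - |a| ^ p - |b| ^ p - p * (signedRpow (p - 1) a * b + a * signedRpow (p - 1) b)

lemma rpowExpansionError_comm (p a b : ℝ) :
    rpowExpansionError p a b = rpowExpansionError p b a := by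
  unfold rpowExpansionError
  rw [add_comm a b]
  ring

lemma Real.abs_sign_le_one (x : ℝ) : |Real.sign x| ≤ 1 := by
  rcases Real.sign_apply_eq x with h | h | h <;> simp [h]

lemma Real.sign_mul_self (x : ℝ) : Real.sign x * x = |x| := by
  rcases lt_trichotomy x 0 with h | rfl | h
  · rw [Real.sign_of_neg h, abs_of_neg h, neg_one_mul]
  · simp
  · rw [Real.sign_of_pos h, abs_of_pos h, one_mul]

lemma Real.sign_mul_le_abs (x y : ℝ) : Real.sign x * y ≤ |y| :=
  calc Real.sign x * y ≤ |Real.sign x| * |y| := by rw [← abs_mul]; exact le_abs_self _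
    _ ≤ |y| := mul_le_of_le_one_left (abs_nonneg y) (Real.abs_sign_le_one x)

lemma abs_sub_eq_abs_add_abs_of_mul_nonpos {x y : ℝ} (h : x * y ≤ 0) : |x - y| = |x| + |y| := by
  rcases mul_nonpos_iff.mp h with ⟨hx, hy⟩ | ⟨hx, hy⟩
  · rw [abs_of_nonneg (by linarith : 0 ≤ x - y), abs_of_nonneg hx, abs_of_nonpos hy]; ring
  · rw [abs_of_nonpos (by linarith : x - y ≤ 0), abs_of_nonpos hx, abs_of_nonneg hy]; ring

lemma abs_signedRpow_le (α x : ℝ) : |signedRpow α x| ≤ |x| ^ α := by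
  rw [signedRpow, abs_mul, abs_of_nonneg (rpow_nonneg (abs_nonneg x) α)]
  exact mul_le_of_le_one_left (rpow_nonneg (abs_nonneg x) α) (Real.abs_sign_le_one x)

lemma abs_signedRpow_sub_le_rpow_add_rpow (α x y : ℝ) :
    |signedRpow α x - signedRpow α y| ≤ |x| ^ α + |y| ^ α :=
  (abs_sub _ _).trans (add_le_add (abs_signedRpow_le α x) (abs_signedRpow_le α y))

lemma abs_signedRpow_sub_of_mul_pos {α x y : ℝ} (h : 0 < x * y) :
    |signedRpow α x - signedRpow α y| = |(|x| ^ α - |y| ^ α)| := by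
  have hsign : Real.sign y = Real.sign x ∧ |Real.sign x| = 1 := by
    rcases mul_pos_iff.mp h with ⟨hx, hy⟩ | ⟨hx, hy⟩
    · simp [Real.sign_of_pos hx, Real.sign_of_pos hy]
    · simp [Real.sign_of_neg hx, Real.sign_of_neg hy]
  rw [signedRpow, signedRpow, hsign.1, ← mul_sub, abs_mul, hsign.2, one_mul]

lemma rpow_tangent_le {p u v : ℝ} (hp : 1 ≤ p) (hu : 0 < u) (hv : 0 ≤ v) :
    u ^ p + p * u ^ (p - 1) * (v - u) ≤ v ^ p := by
  have bernoulli := one_add_mul_self_le_rpow_one_add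
    (by linarith [div_nonneg hv hu.le] : (-1 : ℝ) ≤ v / u - 1) hp
  rw [add_sub_cancel, div_rpow hv hu.le, le_div_iff₀ (rpow_pos_of_pos hu p)] at bernoulli
  calc u ^ p + p * u ^ (p - 1) * (v - u) = (1 + p * (v / u - 1)) * u ^ p := by
        rw [rpow_sub_one hu.ne']
        field_simp
    _ ≤ v ^ p := bernoulli

lemma abs_rpow_sub_rpow_le_rpow_abs_sub {α u v : ℝ} (hα0 : 0 ≤ α) (hα1 : α ≤ 1)
    (hu : 0 ≤ u) (hv : 0 ≤ v) : |u ^ α - v ^ α| ≤ |u - v| ^ α := by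
  wlog hvu : v ≤ u generalizing u v
  · rw [abs_sub_comm, abs_sub_comm u]
    exact this hv hu (le_of_not_ge hvu)
  have subadd : u ^ α ≤ (u - v) ^ α + v ^ α := by
    simpa using rpow_add_le_add_rpow (sub_nonneg.mpr hvu) hv hα0 hα1
  rw [abs_of_nonneg (sub_nonneg.mpr (rpow_le_rpow hv hvu hα0)),
    abs_of_nonneg (sub_nonneg.mpr hvu)]
  linarith

lemma abs_rpow_sub_rpow_le_mul_abs_sub {α u v M : ℝ} (hα : 1 ≤ α)
    (hu : 0 ≤ u) (hv : 0 ≤ v) (huM : u ≤ M) (hvM : v ≤ M) :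
    |u ^ α - v ^ α| ≤ α * M ^ (α - 1) * |u - v| := by
  wlog hvu : v ≤ u generalizing u v
  · rw [abs_sub_comm, abs_sub_comm u]
    exact this hv hu hvM huM (le_of_not_ge hvu)
  rcases hu.eq_or_lt with rfl | hu
  · simp [le_antisymm hvu hv]
  have tangent := rpow_tangent_le hα hu hv
  rw [abs_of_nonneg (sub_nonneg.mpr (rpow_le_rpow hv hvu (by linarith))),
    abs_of_nonneg (sub_nonneg.mpr hvu)]
  calc u ^ α - v ^ α ≤ α * u ^ (α - 1) * (u - v) := by linarith
    _ ≤ α * M ^ (α - 1) * (u - v) := by gcongr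

lemma abs_signedRpow_sub_le_two_mul_rpow {α : ℝ} (hα0 : 0 ≤ α) (hα1 : α ≤ 1)
    (x y : ℝ) :
    |signedRpow α x - signedRpow α y| ≤ 2 * |x - y| ^ α := by
  rcases lt_or_ge 0 (x * y) with h | h
  · rw [abs_signedRpow_sub_of_mul_pos h]
    calc |(|x| ^ α - |y| ^ α)| ≤ |(|x| - |y|)| ^ α :=
          abs_rpow_sub_rpow_le_rpow_abs_sub hα0 hα1 (abs_nonneg x) (abs_nonneg y)
      _ ≤ |x - y| ^ α := rpow_le_rpow (abs_nonneg _) (abs_abs_sub_abs_le_abs_sub x y) hα0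
      _ ≤ 2 * |x - y| ^ α := by linarith [rpow_nonneg (abs_nonneg (x - y)) α]
  · have hxy := abs_sub_eq_abs_add_abs_of_mul_nonpos h
    calc |signedRpow α x - signedRpow α y| ≤ |x| ^ α + |y| ^ α :=
          abs_signedRpow_sub_le_rpow_add_rpow α x y
      _ ≤ |x - y| ^ α + |x - y| ^ α := by
        rw [hxy]
        gcongr <;> linarith [abs_nonneg x, abs_nonneg y]
      _ = 2 * |x - y| ^ α := by ring

lemma abs_signedRpow_sub_le_mul_abs_sub {α : ℝ} (hα : 1 ≤ α) (x y : ℝ) :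
    |signedRpow α x - signedRpow α y| ≤ α * max |x| |y| ^ (α - 1) * |x - y| := by
  set M := max |x| |y|
  have hxM : |x| ≤ M := le_max_left _ _
  have hyM : |y| ≤ M := le_max_right _ _
  rcases lt_or_ge 0 (x * y) with h | h
  · rw [abs_signedRpow_sub_of_mul_pos h]
    calc |(|x| ^ α - |y| ^ α)| ≤ α * M ^ (α - 1) * |(|x| - |y|)| :=
          abs_rpow_sub_rpow_le_mul_abs_sub hα (abs_nonneg x) (abs_nonneg y) hxM hyM
      _ ≤ α * M ^ (α - 1) * |x - y| := by
        have hM : 0 ≤ M := (abs_nonneg x).trans hxM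
        exact mul_le_mul_of_nonneg_left (abs_abs_sub_abs_le_abs_sub x y)
          (mul_nonneg (by linarith) (rpow_nonneg hM _))
  · have rpow_le : ∀ u, 0 ≤ u → u ≤ M → u ^ α ≤ M ^ (α - 1) * u := fun u hu huM =>
      calc u ^ α = u ^ (α - 1) * u := by rw [← rpow_add_one' hu (by linarith), sub_add_cancel]
        _ ≤ M ^ (α - 1) * u := by gcongr
    have hM : 0 ≤ M ^ (α - 1) * |x - y| := by positivity
    calc |signedRpow α x - signedRpow α y| ≤ |x| ^ α + |y| ^ α :=
          abs_signedRpow_sub_le_rpow_add_rpow α x y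
      _ ≤ M ^ (α - 1) * |x| + M ^ (α - 1) * |y| :=
        add_le_add (rpow_le _ (abs_nonneg x) hxM) (rpow_le _ (abs_nonneg y) hyM)
      _ = 1 * M ^ (α - 1) * |x - y| := by rw [abs_sub_eq_abs_add_abs_of_mul_nonpos h]; ring
      _ ≤ α * M ^ (α - 1) * |x - y| := by nlinarith

lemma abs_rpow_add_mul_signedRpow_le {p : ℝ} (hp : 1 ≤ p) (x d : ℝ) :
    |x| ^ p + p * signedRpow (p - 1) x * d ≤ |x + d| ^ p := by
  rcases eq_or_ne x 0 with rfl | hx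
  · simp [signedRpow, zero_rpow (by linarith : p ≠ 0), rpow_nonneg]
  have hsign : Real.sign x * d ≤ |x + d| - |x| := by
    linarith [Real.sign_mul_le_abs x (x + d), Real.sign_mul_self x]
  calc |x| ^ p + p * signedRpow (p - 1) x * d
      = |x| ^ p + p * |x| ^ (p - 1) * (Real.sign x * d) := by rw [signedRpow]; ring
    _ ≤ |x| ^ p + p * |x| ^ (p - 1) * (|x + d| - |x|) := by gcongr
    _ ≤ |x + d| ^ p := rpow_tangent_le hp (abs_pos.mpr hx) (abs_nonneg _)

lemma abs_add_rpow_sub_le_mul_abs_mul {p : ℝ} (hp : 1 ≤ p) (x d : ℝ) :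
    |x + d| ^ p - |x| ^ p - p * signedRpow (p - 1) x * d ≤
      p * |d| * |signedRpow (p - 1) (x + d) - signedRpow (p - 1) x| := by
  have tangent := abs_rpow_add_mul_signedRpow_le hp (x + d) (-d)
  rw [add_neg_cancel_right] at tangent
  calc |x + d| ^ p - |x| ^ p - p * signedRpow (p - 1) x * d
      ≤ p * (d * (signedRpow (p - 1) (x + d) - signedRpow (p - 1) x)) := by linarith
    _ ≤ p * |d| * |signedRpow (p - 1) (x + d) - signedRpow (p - 1) x| := by
      rw [mul_assoc, ← abs_mul]
      exact mul_le_mul_of_nonneg_left (le_abs_self _) (by linarith)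

lemma rpow_sub_two_mul_sq_le {p u v : ℝ} (hp : p ≤ 3) (hv : 0 ≤ v) (hvu : v ≤ u) :
    u ^ (p - 2) * v ^ 2 ≤ u * v ^ (p - 1) := by
  rcases hv.eq_or_lt with rfl | hv
  · rw [zero_pow two_ne_zero, mul_zero]
    exact mul_nonneg (hv.trans hvu) (rpow_nonneg le_rfl _)
  have hu := hv.trans_le hvu
  calc u ^ (p - 2) * v ^ 2 = u ^ (p - 2) * v ^ (3 - p) * v ^ (p - 1) := by
        rw [mul_assoc, ← rpow_add hv, ← rpow_natCast]
        norm_num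
    _ ≤ u ^ (p - 2) * u ^ (3 - p) * v ^ (p - 1) := by gcongr
    _ = u * v ^ (p - 1) := by rw [← rpow_add hu]; norm_num

lemma abs_add_rpow_remainder_le_of_le_two {p a b : ℝ} (hp1 : 1 ≤ p) (hp2 : p ≤ 2)
    (hba : |b| ≤ |a|) :
    |a + b| ^ p - |a| ^ p - p * signedRpow (p - 1) a * b ≤ 4 * p * |a| * |b| ^ (p - 1) := by
  have holder := abs_signedRpow_sub_le_two_mul_rpow (by linarith : 0 ≤ p - 1)
    (by linarith : p - 1 ≤ 1) (a + b) a
  rw [add_sub_cancel_left] at holder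
  calc _ ≤ p * |b| * |signedRpow (p - 1) (a + b) - signedRpow (p - 1) a| :=
        abs_add_rpow_sub_le_mul_abs_mul hp1 a b
    _ ≤ p * |b| * (2 * |b| ^ (p - 1)) := by gcongr
    _ = 2 * p * |b| * |b| ^ (p - 1) := by ring
    _ ≤ 4 * p * |a| * |b| ^ (p - 1) := by gcongr; linarith

lemma abs_add_rpow_remainder_le_of_two_le {p a b : ℝ} (hp2 : 2 ≤ p) (hp3 : p ≤ 3)
    (hba : |b| ≤ |a|) :
    |a + b| ^ p - |a| ^ p - p * signedRpow (p - 1) a * b ≤ 4 * p * |a| * |b| ^ (p - 1) := by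
  have lipschitz := abs_signedRpow_sub_le_mul_abs_sub (by linarith : 1 ≤ p - 1) (a + b) a
  rw [add_sub_cancel_left, show p - 1 - 1 = p - 2 by ring] at lipschitz
  have hmax : max |a + b| |a| ≤ 2 * |a| :=
    max_le (by linarith [abs_add_le a b]) (by linarith [abs_nonneg a])
  have hmax_rpow : max |a + b| |a| ^ (p - 2) ≤ 2 * |a| ^ (p - 2) :=
    calc max |a + b| |a| ^ (p - 2) ≤ (2 * |a|) ^ (p - 2) := by gcongr
      _ = 2 ^ (p - 2) * |a| ^ (p - 2) := mul_rpow zero_le_two (abs_nonneg a)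
      _ ≤ 2 ^ (1 : ℝ) * |a| ^ (p - 2) := by
        gcongr
        · norm_num
        · linarith
      _ = 2 * |a| ^ (p - 2) := by rw [rpow_one]
  calc _ ≤ p * |b| * |signedRpow (p - 1) (a + b) - signedRpow (p - 1) a| :=
        abs_add_rpow_sub_le_mul_abs_mul (by linarith) a b
    _ ≤ p * |b| * ((p - 1) * (2 * |a| ^ (p - 2)) * |b|) := by
      refine mul_le_mul_of_nonneg_left (lipschitz.trans ?_) (by positivity)
      gcongr
      linarith
    _ = 2 * p * (p - 1) * (|a| ^ (p - 2) * |b| ^ 2) := by ring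
    _ ≤ 2 * p * 2 * (|a| * |b| ^ (p - 1)) := by
      gcongr 2 * p * ?_ * ?_
      · linarith
      · exact rpow_sub_two_mul_sq_le hp3 (abs_nonneg b) hba
    _ = 4 * p * |a| * |b| ^ (p - 1) := by ring

lemma abs_rpowExpansionError_le {p a b : ℝ} (hp1 : 1 ≤ p) (hp3 : p ≤ 3) (hba : |b| ≤ |a|) :
    |rpowExpansionError p a b| ≤ (5 * p + 1) * |a| * |b| ^ (p - 1) := by
  set R := |a + b| ^ p - |a| ^ p - p * signedRpow (p - 1) a * b
  have hR0 : 0 ≤ R := by linarith [abs_rpow_add_mul_signedRpow_le hp1 a b]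
  have hR : R ≤ 4 * p * |a| * |b| ^ (p - 1) := by
    rcases le_total p 2 with hp2 | hp2
    · exact abs_add_rpow_remainder_le_of_le_two hp1 hp2 hba
    · exact abs_add_rpow_remainder_le_of_two_le hp2 hp3 hba
  have hbp : |b| ^ p ≤ |a| * |b| ^ (p - 1) :=
    calc |b| ^ p = |b| * |b| ^ (p - 1) := by
          rw [mul_comm, ← rpow_add_one' (abs_nonneg b) (by linarith), sub_add_cancel]
      _ ≤ |a| * |b| ^ (p - 1) := by gcongr
  have hcross : |p * (a * signedRpow (p - 1) b)| ≤ p * (|a| * |b| ^ (p - 1)) := by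
    rw [abs_mul, abs_mul, abs_of_nonneg (by linarith : 0 ≤ p)]
    gcongr
    exact abs_signedRpow_le _ b
  have hsplit : rpowExpansionError p a b = R - |b| ^ p - p * (a * signedRpow (p - 1) b) := by
    unfold rpowExpansionError; ring
  have hK : 0 ≤ p * (|a| * |b| ^ (p - 1)) := by positivity
  rw [hsplit, abs_le]
  constructor <;> nlinarith [abs_le.mp hcross, rpow_nonneg (abs_nonneg b) p]

theorem stmt_4 (p : ℝ) (hp1 : 1 ≤ p) (hp3 : p ≤ 3) :
    ∃ C : ℝ, 0 < C ∧ ∀ a b : ℝ,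
      (|b| ≤ |a| →
        |(|a + b| ^ p - |a| ^ p - |b| ^ p -
            p * (Real.sign a * |a| ^ (p - 1) * b + a * Real.sign b * |b| ^ (p - 1)))| ≤
          C * |a| * |b| ^ (p - 1)) ∧
      (|a| ≤ |b| →
        |(|a + b| ^ p - |a| ^ p - |b| ^ p -
            p * (Real.sign a * |a| ^ (p - 1) * b + a * Real.sign b * |b| ^ (p - 1)))| ≤
          C * |a| ^ (p - 1) * |b|) := by
  refine ⟨5 * p + 1, by linarith, fun a b => ?_⟩
  rw [mul_assoc a (Real.sign b)]
  refine ⟨abs_rpowExpansionError_le hp1 hp3, fun hab => ?_⟩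
  have swapped := abs_rpowExpansionError_le hp1 hp3 hab
  rw [rpowExpansionError_comm, mul_right_comm] at swapped
  exact swapped
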